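/- Let n(x) := (2π)^{-1/2} exp(−x²/2) be the standard normal density and N(x) := ∫_{-∞}^x n(y) dy the standard normal distribution function. Fix r < 0, μ > 0 and T > 0, and define F(v) := N(−(r+μT)v/√T) − exp(−2μrv²)·N(−(r−μT)v/√T) for v ∈ ℝ. Then F'(v) < 0 for every v > 0; in particular F is strictly decreasing on (0, ∞). -/

import Mathlib

/-!
Differentiating, the two Gaussian densities that appear combine into one: completing the square
shows `exp (-2μrv²) · n(-(r-μT)v/√T) = n(-(r+μT)v/√T)`, so
`F'(v) = -2μ√T · n(-(r+μT)v/√T) + 4μrv · exp (-2μrv²) · N(-(r-μT)v/√T)`.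
For `μ > 0`, `r < 0`, `v > 0` both summands are negative, since `n` and `N` are positive.
-/

open MeasureTheory

noncomputable def stdGaussPDF (x : ℝ) : ℝ :=
  (Real.sqrt (2 * Real.pi))⁻¹ * Real.exp (-x ^ 2 / 2)

noncomputable def stdGaussCDF (x : ℝ) : ℝ :=
  ∫ y in Set.Iic x, stdGaussPDF y

open Real Set ProbabilityTheory

theorem hasDerivAt_integral_Iic {E : Type*} [NormedAddCommGroup E] [NormedSpace ℝ E]
    [CompleteSpace E] {f : ℝ → E} (hf : Continuous f) (hfi : Integrable f) (x : ℝ) :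
    HasDerivAt (fun t => ∫ y in Iic t, f y) (f x) x := by
  have hsplit : (fun t => ∫ y in Iic t, f y) =
      fun t => (∫ y in Iic 0, f y) + ∫ y in (0 : ℝ)..t, f y := by
    funext t
    rw [← intervalIntegral.integral_Iic_sub_Iic hfi.integrableOn hfi.integrableOn, add_sub_cancel]
  rw [hsplit]
  exact (intervalIntegral.integral_hasDerivAt_right hfi.intervalIntegrable
    (hf.stronglyMeasurableAtFilter _ _) hf.continuousAt).const_add _

theorem stdGaussPDF_eq_gaussianPDFReal : stdGaussPDF = gaussianPDFReal 0 1 := by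
  funext x
  simp [stdGaussPDF, gaussianPDFReal]

theorem stdGaussPDF_pos (x : ℝ) : 0 < stdGaussPDF x := by
  rw [stdGaussPDF_eq_gaussianPDFReal]
  exact gaussianPDFReal_pos _ _ _ one_ne_zero

theorem stdGaussPDF_eq_exp_mul (x y : ℝ) :
    stdGaussPDF x = exp ((y ^ 2 - x ^ 2) / 2) * stdGaussPDF y := by
  rw [stdGaussPDF, stdGaussPDF, mul_left_comm, ← exp_add]
  ring_nf

theorem continuous_stdGaussPDF : Continuous stdGaussPDF := by
  unfold stdGaussPDF
  fun_prop

theorem integrable_stdGaussPDF : Integrable stdGaussPDF :=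
  stdGaussPDF_eq_gaussianPDFReal ▸ integrable_gaussianPDFReal 0 1

theorem hasDerivAt_stdGaussCDF (x : ℝ) : HasDerivAt stdGaussCDF (stdGaussPDF x) x :=
  hasDerivAt_integral_Iic continuous_stdGaussPDF integrable_stdGaussPDF x

theorem stdGaussCDF_pos (x : ℝ) : 0 < stdGaussCDF x := by
  rw [stdGaussCDF, setIntegral_pos_iff_support_of_nonneg_ae
    (ae_of_all _ fun y => (stdGaussPDF_pos y).le) integrable_stdGaussPDF.integrableOn,
    Function.support_eq_univ fun y => (stdGaussPDF_pos y).ne', univ_inter, volume_Iic]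
  exact ENNReal.zero_lt_top

noncomputable def cdfCombination (r μ T v : ℝ) : ℝ :=
  stdGaussCDF (-(r + μ * T) * v / √T)
    - exp (-2 * μ * r * v ^ 2) * stdGaussCDF (-(r - μ * T) * v / √T)

theorem hasDerivAt_cdfCombination {T : ℝ} (hT : 0 < T) (r μ v : ℝ) :
    HasDerivAt (cdfCombination r μ T)
      (-2 * μ * √T * stdGaussPDF (-(r + μ * T) * v / √T)
        + 4 * μ * r * v * exp (-2 * μ * r * v ^ 2) * stdGaussCDF (-(r - μ * T) * v / √T)) v := by
  have hs : √T ≠ 0 := (sqrt_pos.mpr hT).ne'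
  have hsq : √T ^ 2 = T := sq_sqrt hT.le
  have hlin (c : ℝ) : HasDerivAt (fun v : ℝ => c * v / √T) (c / √T) v := by
    simpa using ((hasDerivAt_id v).const_mul c).div_const √T
  have hexp : HasDerivAt (fun v : ℝ => exp (-2 * μ * r * v ^ 2))
      (exp (-2 * μ * r * v ^ 2) * (-2 * μ * r * (2 * v))) v := by
    simpa using ((hasDerivAt_pow 2 v).const_mul (-2 * μ * r)).exp
  have hraw := ((hasDerivAt_stdGaussCDF _).comp v (hlin (-(r + μ * T)))).sub
    (hexp.mul ((hasDerivAt_stdGaussCDF _).comp v (hlin (-(r - μ * T)))))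
  have hpdf : exp (-2 * μ * r * v ^ 2) * stdGaussPDF (-(r - μ * T) * v / √T)
      = stdGaussPDF (-(r + μ * T) * v / √T) := by
    rw [stdGaussPDF_eq_exp_mul (-(r + μ * T) * v / √T) (-(r - μ * T) * v / √T)]
    congr 2
    field_simp
    linear_combination (-4 * μ * r * v ^ 2) * hsq
  refine hraw.congr_deriv ?_
  rw [← hpdf, Function.comp_apply]
  generalize exp (-2 * μ * r * v ^ 2) = e
  generalize stdGaussPDF (-(r - μ * T) * v / √T) = p
  field_simp
  linear_combination (2 * μ * e * p) * hsq

theorem deriv_cdfCombination_neg {r μ T v : ℝ} (hr : r < 0) (hμ : 0 < μ) (hT : 0 < T)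
    (hv : 0 < v) : deriv (cdfCombination r μ T) v < 0 := by
  rw [(hasDerivAt_cdfCombination hT r μ v).deriv]
  have hpdf_term : -2 * μ * √T * stdGaussPDF (-(r + μ * T) * v / √T) < 0 := by
    have := mul_pos (mul_pos hμ (sqrt_pos.mpr hT)) (stdGaussPDF_pos (-(r + μ * T) * v / √T))
    linarith
  have hcdf_term :
      4 * μ * r * v * exp (-2 * μ * r * v ^ 2) * stdGaussCDF (-(r - μ * T) * v / √T) < 0 := by
    have hcoef : 4 * μ * r * v < 0 := by nlinarith [mul_pos hμ hv]
    exact mul_neg_of_neg_of_pos (mul_neg_of_neg_of_pos hcoef (exp_pos _)) (stdGaussCDF_pos _)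
  linarith

/-- with `r < 0`, `μ > 0`, `T > 0` and
`F(v) = N(−(r+μT)v/√T) − exp(−2μrv²) N(−(r−μT)v/√T)`, one has `F'(v) < 0` for
every `v > 0`; in particular `F` is strictly decreasing on `(0,∞)`. -/
theorem stmt_12 (r μ T : ℝ) (hr : r < 0) (hμ : 0 < μ) (hT : 0 < T) (F : ℝ → ℝ)
    (hF : ∀ v, F v =
      stdGaussCDF (-(r + μ * T) * v / Real.sqrt T)
        - Real.exp (-2 * μ * r * v ^ 2) * stdGaussCDF (-(r - μ * T) * v / Real.sqrt T)) :
    (∀ v : ℝ, 0 < v → deriv F v < 0) ∧ StrictAntiOn F (Set.Ioi 0) := by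
  obtain rfl : F = cdfCombination r μ T := funext hF
  have hcont : Continuous (cdfCombination r μ T) :=
    continuous_iff_continuousAt.mpr fun v => (hasDerivAt_cdfCombination hT r μ v).continuousAt
  refine ⟨fun v hv => deriv_cdfCombination_neg hr hμ hT hv,
    strictAntiOn_of_deriv_neg (convex_Ioi 0) hcont.continuousOn fun v hv => ?_⟩
  rw [interior_Ioi] at hv
  exact deriv_cdfCombination_neg hr hμ hT hv
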